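/- Let w be an odd-length binary word with no factor 11. If the leading (most significant) digit of w is 0 then val_F(w) ≥ 0, and if the leading digit is 1 then val_F(w) < 0. -/
import Mathlib


/-- Fibonacci sequence with `F 0 = 1`, `F 1 = 1`, `F 2 = 2`. -/
def F : ℕ → ℤ
  | 0 => 1
  | 1 => 1
  | (n+2) => F (n+1) + F n

/-- Numerical value of a binary digit. -/
def bv (x : Bool) : ℤ := if x then 1 else 0

/-- Value of an odd-length binary word `w = w_{2k+1} ⋯ w_1` (most significant
digit first): `val_F(w) = Σ_{i=1}^{2k} w_i F_i − w_{2k+1} F_{2k}`. -/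
def valF (w : List Bool) : ℤ :=
  (∑ i ∈ Finset.range (w.length - 1), bv (w.reverse.getD i false) * F (i+1))
    - bv (w.reverse.getD (w.length - 1) false) * F (w.length - 1)

/-- The word has no factor `11`. -/
def no11 (w : List Bool) : Prop :=
  List.Chain' (fun x y => ¬(x = true ∧ y = true)) w

/-- Words of the canonical representation language: odd length, no factor 11,
not beginning with 000 nor with 101. -/
def IsRep (w : List Bool) : Prop :=
  Odd w.length ∧ no11 w ∧
    ¬ ([false, false, false] <+: w) ∧ ¬ ([true, false, true] <+: w)

/-- `Ik k = {i ∈ ℤ : −F_{2k} ≤ i < F_{2k+1}}`. -/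
def Ik (k : ℕ) : Set ℤ := {i : ℤ | -F (2*k) ≤ i ∧ i < F (2*k+1)}

/-- Shifted version of `Ik` incorporating `I_{−1} = ∅`. -/
def Iext : ℕ → Set ℤ
  | 0 => ∅
  | (k+1) => Ik k

/-- The morphism `h : 0 ↦ 00, 1 ↦ 01, 2 ↦ 10` on single letters. -/
def h3 : Fin 3 → List Bool
  | 0 => [false, false]
  | 1 => [false, true]
  | 2 => [true, false]


lemma F_pos : ∀ n, 0 < F n
  | 0 => by norm_num [F]
  | 1 => by norm_num [F]
  | (n+2) => by rw [F]; have := F_pos (n+1); have := F_pos n; omega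

lemma valF_cons_cons (a b c : Bool) (v : List Bool) :
    valF (a :: b :: c :: v) =
      valF (c :: v) + (bv c + bv b - bv a) * F ((c :: v).length + 1) := by
  simp only [valF, List.length_cons, List.reverse_cons]
  set t := v.reverse ++ [c] with ht
  have htl : t.length = v.length + 1 := by simp [ht]
  have h1 : ∀ i, i < v.length + 1 → ((t ++ [b]) ++ [a]).getD i false = t.getD i false := by
    intro i hi
    rw [List.getD_append _ _ _ _ (by simp only [List.length_append, htl]; omega)]
    rw [List.getD_append _ _ _ _ (by omega)]
  have h2 : ((t ++ [b]) ++ [a]).getD (v.length + 1) false = b := by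
    rw [List.getD_append _ _ _ _ (by simp [htl])]
    rw [List.getD_append_right _ _ _ _ (by omega)]
    simp [htl]
  have h3 : ((t ++ [b]) ++ [a]).getD (v.length + 2) false = a := by
    rw [List.getD_append_right _ _ _ _ (by simp [htl])]
    simp [htl]
  have h4 : t.getD v.length false = c := by
    rw [ht, List.getD_append_right _ _ _ _ (by simp)]
    simp
  simp only [Nat.add_sub_cancel]
  rw [show v.length + 1 + 1 = (v.length + 1) + 1 from rfl,
    Finset.sum_range_succ, Finset.sum_range_succ (n := v.length)]
  rw [h1 v.length (by omega), h2, h4]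
  rw [show ((t ++ [b]) ++ [a]).getD (v.length + 1 + 1) false = a from h3]
  rw [Finset.sum_congr rfl (fun i hi => by
    rw [h1 i (by have := Finset.mem_range.mp hi; omega)])]
  have hF : F (v.length + 2) = F (v.length + 1) + F (v.length) := by rw [F]
  rw [hF]; ring

lemma key (n : ℕ) : ∀ (w : List Bool), w.length = 2*n+1 → no11 w →
    ((w.head? = some false → 0 ≤ valF w ∧ valF w < F w.length) ∧
     (w.head? = some true → -F (w.length - 1) ≤ valF w ∧ valF w < 0)) := by
  induction n with
  | zero =>
    rintro (_ | ⟨a, _ | ⟨b, v⟩⟩) hl _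
    · simp at hl
    · cases a <;> constructor <;> intro h <;> simp at h <;> norm_num [valF, bv, F]
    · simp only [List.length_cons] at hl; omega
  | succ n ih =>
    rintro (_ | ⟨a, _ | ⟨b, _ | ⟨c, u⟩⟩⟩) hl h11
    · simp at hl
    · simp only [List.length_cons, List.length_nil] at hl; omega
    · simp only [List.length_cons, List.length_nil] at hl; omega
    · have hul : u.length = 2*n := by simp at hl; omega
      have hcl : (c :: u).length = 2*n+1 := by simp [hul]
      obtain ⟨hab, h11'⟩ := List.isChain_cons_cons.mp h11
      obtain ⟨hbc, h11v⟩ := List.isChain_cons_cons.mp h11'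
      have IH := ih (c :: u) hcl h11v
      rw [hcl] at IH
      simp only [List.head?_cons] at IH
      have hV := valF_cons_cons a b c u
      rw [hcl] at hV
      have hwl : (a :: b :: c :: u).length = 2*n+1+2 := by simp only [List.length_cons, hul]
      rw [hwl, hV]
      simp only [List.head?_cons, Nat.add_sub_cancel]
      have hF1 : F (2*n+1+2) = F (2*n+1+1) + F (2*n+1) := by rw [F]
      have hF2 : F (2*n+1+1) = F (2*n+1) + F (2*n) := by
        rw [show 2*n+1+1 = 2*n+2 by ring, show 2*n+1 = 2*n+1 from rfl, F]
      have hp1 := F_pos (2*n)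
      have hp2 := F_pos (2*n+1)
      cases a <;> cases b <;> cases c <;>
        simp_all [bv] <;> obtain ⟨h1, h2⟩ := IH <;>
        first
          | linarith
          | constructor <;> linarith

/-- The leading digit of an odd-length word with no factor 11 determines the
sign of its value: leading 0 gives a nonnegative value, leading 1 a negative one. -/
theorem valF_sign (w : List Bool) (hodd : Odd w.length) (h11 : no11 w) :
    (w.head? = some false → 0 ≤ valF w) ∧
      (w.head? = some true → valF w < 0) := by
  obtain ⟨k, hk⟩ := hodd
  have h := key k w (by omega) h11
  exact ⟨fun hw => (h.1 hw).1, fun hw => (h.2 hw).2⟩
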